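/- arXiv:2206.05036 — 2 statements merged into one kernel-verified Lean document; each statement's English description precedes it below -/
import Mathlib

section
/- Let Ω be a class of C*-algebras that is closed under passing to unital hereditary C*-subalgebras, and let A be a unital simple C*-algebra. Then A belongs to TAΩ if and only if A belongs to STAΩ. -/
/-!
TA ⇒ STA: the same `p` and `B` work, because `(y² - y p y - ε)₊ = (y (1 - p) y - ε)₊` is
`g y (1 - p) y g` for a function `g` of `y (1 - p) y`: a conjugate of `1 - p`, hence `≾ a`.

STA ⇒ TA: apply STA with `y = 1` and `ε < 1`. For the projection `1 - p` the cut-down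
`(1 - p - ε)₊` is `(1 - ε)(1 - p)`, so `1 - p ≾ a`. Then replace `B` by its corner `p B p`: it
is in `Ω`, has unit `p`, and still approximates `p F p` because compressing by `p` does not
increase norms.
-/

open Filter Topology
open scoped Matrix.Norms.L2Operator

section Defs

variable {A : Type*} [NonUnitalCStarAlgebra A] [PartialOrder A] [StarOrderedRing A]

def CuntzLE (a b : A) : Prop :=
  ∃ v : ℕ → A, Tendsto (fun n => ‖v n * b * star (v n) - a‖) atTop (nhds 0)

def CuntzLEIn (S : Set A) (a b : A) : Prop :=
  ∃ v : ℕ → A, (∀ n, v n ∈ S) ∧ Tendsto (fun n => ‖v n * b * star (v n) - a‖) atTop (nhds 0)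

noncomputable def cutoff (ε : ℝ) (a : A) : A := cfcₙ (fun t : ℝ => max 0 (t - ε)) a

def IsProjection (p : A) : Prop := IsSelfAdjoint p ∧ p * p = p

def IsSimpleCStarAlgebra (A : Type*) [NonUnitalCStarAlgebra A] : Prop :=
  (⊥ : TwoSidedIdeal A) ≠ ⊤ ∧
    ∀ I : TwoSidedIdeal A, IsClosed (I : Set A) → I = ⊥ ∨ I = ⊤

def IsCompletelyPositive {n : ℕ} (ψ : Matrix (Fin n) (Fin n) ℂ →ₗ[ℂ] A) : Prop :=
  ∀ (k : ℕ) (M : Matrix (Fin k) (Fin k) (Matrix (Fin n) (Fin n) ℂ)),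
    (∃ N : Matrix (Fin k) (Fin k) (Matrix (Fin n) (Fin n) ℂ), M = star N * N) →
      ∃ N' : Matrix (Fin k) (Fin k) A, M.map ψ = star N' * N'

def IsOrderZeroCPCInto {n : ℕ} (S : Set A) (ψ : Matrix (Fin n) (Fin n) ℂ →ₗ[ℂ] A) : Prop :=
  (∀ x, ψ x ∈ S) ∧ IsCompletelyPositive ψ ∧ (∀ x, ‖ψ x‖ ≤ ‖x‖) ∧
    ∀ e f : Matrix (Fin n) (Fin n) ℂ, e * f = 0 → ψ e * ψ f = 0

/-- A (possibly non-unital) C*-algebra is tracially 𝒵-absorbing. -/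
def TraciallyZAbsorbing (A : Type*) [NonUnitalCStarAlgebra A] [PartialOrder A]
    [StarOrderedRing A] : Prop :=
  IsEmpty (A ≃⋆ₐ[ℂ] ℂ) ∧
    ∀ (F : Finset A) (ε : ℝ), 0 < ε → ∀ a b : A, 0 ≤ a → a ≠ 0 → 0 ≤ b → b ≠ 0 →
      ∀ n : ℕ, 0 < n →
        ∃ ψ : Matrix (Fin n) (Fin n) ℂ →ₗ[ℂ] A, IsOrderZeroCPCInto Set.univ ψ ∧
          CuntzLE (cutoff ε (b * b - b * ψ 1 * b)) a ∧
          ∀ x : Matrix (Fin n) (Fin n) ℂ, ‖x‖ = 1 → ∀ y ∈ F, ‖ψ x * y - y * ψ x‖ < ε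

/-- A C*-subalgebra `B ⊆ A` is tracially 𝒵-absorbing (as a C*-algebra in its own right). -/
def TraciallyZAbsorbingIn (B : NonUnitalStarSubalgebra ℂ A) : Prop :=
  IsEmpty (B ≃⋆ₐ[ℂ] ℂ) ∧
    ∀ (F : Finset A), (F : Set A) ⊆ (B : Set A) → ∀ ε : ℝ, 0 < ε →
      ∀ a b : A, a ∈ B → 0 ≤ a → a ≠ 0 → b ∈ B → 0 ≤ b → b ≠ 0 →
        ∀ n : ℕ, 0 < n →
          ∃ ψ : Matrix (Fin n) (Fin n) ℂ →ₗ[ℂ] A, IsOrderZeroCPCInto (B : Set A) ψ ∧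
            CuntzLEIn (B : Set A) (cutoff ε (b * b - b * ψ 1 * b)) a ∧
            ∀ x : Matrix (Fin n) (Fin n) ℂ, ‖x‖ = 1 → ∀ y ∈ F, ‖ψ x * y - y * ψ x‖ < ε

/-- The corner `p B p` of a subalgebra `B` by a projection `p`. -/
def corner (p : A) (B : NonUnitalStarSubalgebra ℂ A) : NonUnitalStarSubalgebra ℂ A where
  carrier := {x | x ∈ B ∧ p * x = x ∧ x * p = x ∧ p * star x = star x ∧ star x * p = star x}
  add_mem' := by
    rintro x y ⟨hxB, hx1, hx2, hx3, hx4⟩ ⟨hyB, hy1, hy2, hy3, hy4⟩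
    refine ⟨add_mem hxB hyB, ?_, ?_, ?_, ?_⟩ <;>
      simp [mul_add, add_mul, star_add, hx1, hx2, hx3, hx4, hy1, hy2, hy3, hy4]
  zero_mem' := ⟨zero_mem _, by simp, by simp, by simp, by simp⟩
  mul_mem' := by
    rintro x y ⟨hxB, hx1, hx2, hx3, hx4⟩ ⟨hyB, hy1, hy2, hy3, hy4⟩
    refine ⟨mul_mem hxB hyB, ?_, ?_, ?_, ?_⟩
    · rw [← mul_assoc, hx1]
    · rw [mul_assoc, hy2]
    · rw [star_mul, ← mul_assoc, hy3]
    · rw [star_mul, mul_assoc, hx4]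
  smul_mem' := by
    rintro c x ⟨hxB, hx1, hx2, hx3, hx4⟩
    refine ⟨SMulMemClass.smul_mem c hxB, ?_, ?_, ?_, ?_⟩ <;>
      simp [mul_smul_comm, smul_mul_assoc, star_smul, hx1, hx2, hx3, hx4]
  star_mem' := by
    rintro x ⟨hxB, hx1, hx2, hx3, hx4⟩
    exact ⟨star_mem hxB, hx3, hx4, by simpa using hx1, by simpa using hx2⟩

/-- Membership in `STA Ω`, relative to an ambient subalgebra `C` of `A`. -/
def MemSTA (Ω : Set (NonUnitalStarSubalgebra ℂ A)) (C : NonUnitalStarSubalgebra ℂ A) : Prop :=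
  ∀ ε : ℝ, 0 < ε → ∀ F : Finset A, (F : Set A) ⊆ (C : Set A) →
    ∀ a y : A, a ∈ C → 0 ≤ a → a ≠ 0 → y ∈ C → 0 ≤ y →
      ∃ B ∈ Ω, B ≤ C ∧ IsClosed (B : Set A) ∧
        ∃ p ∈ B, IsProjection p ∧
          (∀ x ∈ F, ‖x * p - p * x‖ < ε) ∧
          (∀ x ∈ F, ∃ b ∈ B, ‖p * x * p - b‖ < ε) ∧
          CuntzLEIn (C : Set A) (cutoff ε (y * y - y * p * y)) a

end Defs

section UnitalDefs

variable {A : Type*} [CStarAlgebra A] [PartialOrder A] [StarOrderedRing A]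

/-- Membership in `TA Ω` for a unital C*-algebra. -/
def MemTA (Ω : Set (NonUnitalStarSubalgebra ℂ A)) : Prop :=
  ∀ ε : ℝ, 0 < ε → ∀ F : Finset A, ∀ a : A, 0 ≤ a → a ≠ 0 →
    ∃ (p : A) (B : NonUnitalStarSubalgebra ℂ A), IsProjection p ∧ B ∈ Ω ∧
      IsClosed (B : Set A) ∧ p ∈ B ∧ (∀ b ∈ B, p * b = b ∧ b * p = b) ∧
      (∀ x ∈ F, ‖x * p - p * x‖ < ε) ∧
      (∀ x ∈ F, ∃ b ∈ B, ‖p * x * p - b‖ < ε) ∧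
      CuntzLE (1 - p) a

/-- A unital C*-algebra is tracially 𝒵-absorbing in the unital sense. -/
def TraciallyZAbsorbingUnital (A : Type*) [CStarAlgebra A] [PartialOrder A]
    [StarOrderedRing A] : Prop :=
  IsEmpty (A ≃⋆ₐ[ℂ] ℂ) ∧
    ∀ (F : Finset A) (ε : ℝ), 0 < ε → ∀ a : A, 0 ≤ a → a ≠ 0 →
      ∀ n : ℕ, 0 < n →
        ∃ ψ : Matrix (Fin n) (Fin n) ℂ →ₗ[ℂ] A, IsOrderZeroCPCInto Set.univ ψ ∧
          CuntzLE (1 - ψ 1) a ∧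
          ∀ x : Matrix (Fin n) (Fin n) ℂ, ‖x‖ = 1 → ∀ y ∈ F, ‖ψ x * y - y * ψ x‖ < ε

end UnitalDefs

section CuntzSubequivalence

variable {A : Type*} [NonUnitalCStarAlgebra A]

theorem CuntzLE.mul_mul_star {x a : A} (h : CuntzLE x a) (c : A) :
    CuntzLE (c * x * star c) a := by
  obtain ⟨v, hv⟩ := h
  refine ⟨fun n => c * v n, ?_⟩
  have hconj : ∀ n, c * v n * a * star (c * v n) - c * x * star c
      = c * (v n * a * star (v n) - x) * star c := fun n => by
    simp only [star_mul]
    noncomm_ring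
  have hle : ∀ n, ‖c * (v n * a * star (v n) - x) * star c‖
      ≤ ‖c‖ * ‖v n * a * star (v n) - x‖ * ‖c‖ := fun n =>
    calc ‖c * (v n * a * star (v n) - x) * star c‖
        ≤ ‖c * (v n * a * star (v n) - x)‖ * ‖star c‖ := norm_mul_le _ _
      _ ≤ ‖c‖ * ‖v n * a * star (v n) - x‖ * ‖c‖ := by
          rw [norm_star]; gcongr; exact norm_mul_le _ _
  simp only [hconj]
  refine squeeze_zero (fun n => norm_nonneg _) hle ?_
  simpa using (hv.const_mul ‖c‖).mul_const ‖c‖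

theorem CuntzLE.smul {x a : A} {r : ℝ} (hr : 0 ≤ r) (h : CuntzLE x a) :
    CuntzLE (r • x) a := by
  obtain ⟨v, hv⟩ := h
  refine ⟨fun n => Real.sqrt r • v n, ?_⟩
  have hscale : ∀ n, (Real.sqrt r • v n) * a * star (Real.sqrt r • v n) - r • x
      = r • (v n * a * star (v n) - x) := fun n => by
    rw [star_smul, star_trivial, smul_mul_assoc, smul_mul_assoc, mul_smul_comm, smul_smul,
      Real.mul_self_sqrt hr, smul_sub]
  simp only [hscale, norm_smul, Real.norm_eq_abs, abs_of_nonneg hr]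
  simpa using hv.const_mul r

theorem CuntzLEIn.cuntzLE {S : Set A} {x a : A} (h : CuntzLEIn S x a) : CuntzLE x a :=
  let ⟨v, _, hv⟩ := h
  ⟨v, hv⟩

theorem cuntzLEIn_univ_iff {x a : A} : CuntzLEIn Set.univ x a ↔ CuntzLE x a :=
  ⟨CuntzLEIn.cuntzLE, fun ⟨v, hv⟩ => ⟨v, fun _ => Set.mem_univ _, hv⟩⟩

end CuntzSubequivalence

section Cutoff

variable {A : Type*} [NonUnitalCStarAlgebra A]

/-- `t ↦ √((t - ε)₊ / t)`, with the denominator clamped below by `ε` so that it is continuous;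
its square times `t` is `(t - ε)₊`. -/
noncomputable def cutoffRoot (ε : ℝ) (t : ℝ) : ℝ := Real.sqrt (max 0 (t - ε) / max ε t)

theorem continuous_cutoffRoot {ε : ℝ} (hε : 0 < ε) : Continuous (cutoffRoot ε) := by
  refine Real.continuous_sqrt.comp (Continuous.div (by fun_prop) (by fun_prop) fun t => ?_)
  exact (hε.trans_le (le_max_left ε t)).ne'

theorem cutoffRoot_zero {ε : ℝ} (hε : 0 < ε) : cutoffRoot ε 0 = 0 := by
  simp [cutoffRoot, hε.le]

theorem cutoffRoot_mul_mul_cutoffRoot {ε : ℝ} (hε : 0 < ε) (t : ℝ) :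
    cutoffRoot ε t * t * cutoffRoot ε t = max 0 (t - ε) := by
  rcases le_or_gt t ε with h | h
  · simp [cutoffRoot, h]
  · have ht : 0 < t := hε.trans h
    have hq : 0 ≤ (t - ε) / t := div_nonneg (by linarith) ht.le
    rw [cutoffRoot, max_eq_right h.le, max_eq_right (by linarith : (0 : ℝ) ≤ t - ε),
      mul_right_comm, Real.mul_self_sqrt hq, div_mul_cancel₀ _ ht.ne']

theorem cutoff_eq_mul_mul {ε : ℝ} (hε : 0 < ε) {z : A} (hz : IsSelfAdjoint z) :
    cutoff ε z = cfcₙ (cutoffRoot ε) z * z * cfcₙ (cutoffRoot ε) z := by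
  have hg : ContinuousOn (cutoffRoot ε) (quasispectrum ℝ z) :=
    (continuous_cutoffRoot hε).continuousOn
  have hg0 := cutoffRoot_zero hε
  calc cutoff ε z = cfcₙ (fun t => cutoffRoot ε t * t * cutoffRoot ε t) z :=
        cfcₙ_congr fun t _ => (cutoffRoot_mul_mul_cutoffRoot hε t).symm
    _ = cfcₙ (cutoffRoot ε) z * cfcₙ (fun t => t) z * cfcₙ (cutoffRoot ε) z := by
        rw [cfcₙ_mul _ _ z (by fun_prop) (by simp [hg0]) hg hg0, cfcₙ_mul _ _ z hg hg0]
    _ = cfcₙ (cutoffRoot ε) z * z * cfcₙ (cutoffRoot ε) z := by rw [cfcₙ_id' ℝ z]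

theorem CuntzLE.cutoff_mul_mul {ε : ℝ} (hε : 0 < ε) {q y a : A} (hq : IsSelfAdjoint q)
    (hy : IsSelfAdjoint y) (h : CuntzLE q a) : CuntzLE (cutoff ε (y * q * y)) a := by
  set g := cfcₙ (cutoffRoot ε) (y * q * y)
  have hg : IsSelfAdjoint g := cfcₙ_predicate _ _
  have hyqy : IsSelfAdjoint (y * q * y) := by
    simpa only [hy.star_eq] using hq.conjugate' y
  have hconj : cutoff ε (y * q * y) = g * y * q * star (g * y) := by
    rw [cutoff_eq_mul_mul hε hyqy, star_mul, hg.star_eq, hy.star_eq]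
    simp only [g, mul_assoc]
  exact hconj ▸ h.mul_mul_star (g * y)

theorem IsProjection.isStarProjection {p : A} (hp : IsProjection p) : IsStarProjection p :=
  ⟨hp.2, hp.1⟩

theorem IsProjection.cutoff_eq {p : A} (hp : IsProjection p) {ε : ℝ} (hε0 : 0 ≤ ε) (hε : ε < 1) :
    cutoff ε p = (1 - ε) • p := by
  rw [cutoff, cfcₙ_congr (g := fun t : ℝ => (1 - ε) * t), cfcₙ_const_mul_id (1 - ε) p hp.1]
  intro t ht
  rcases hp.isStarProjection.isIdempotentElem.quasispectrum_subset ℝ ht with rfl | rfl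
  · simp [hε0]
  · simp [hε.le]

theorem CuntzLE.of_cutoff_of_isProjection {ε : ℝ} (hε0 : 0 ≤ ε) (hε : ε < 1) {p a : A}
    (hp : IsProjection p) (h : CuntzLE (cutoff ε p) a) : CuntzLE p a := by
  rw [hp.cutoff_eq hε0 hε] at h
  have hpos : 0 < 1 - ε := by linarith
  simpa [smul_smul, inv_mul_cancel₀ hpos.ne'] using h.smul (inv_nonneg.mpr hpos.le)

end Cutoff

section Corner

variable {A : Type*} [NonUnitalCStarAlgebra A] {p : A} {B : NonUnitalStarSubalgebra ℂ A}

theorem isClosed_corner (hB : IsClosed (B : Set A)) : IsClosed (corner p B : Set A) :=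
  hB.inter <| (isClosed_eq (by fun_prop) (by fun_prop)).inter <|
    (isClosed_eq (by fun_prop) (by fun_prop)).inter <|
    (isClosed_eq (by fun_prop) (by fun_prop)).inter (isClosed_eq (by fun_prop) (by fun_prop))

theorem IsProjection.mul_mul_mem_corner (hp : IsProjection p) (hpB : p ∈ B) {b : A}
    (hb : b ∈ B) : p * b * p ∈ corner p B := by
  have hstar : star (p * b * p) = p * star b * p := by
    simp only [star_mul, hp.1.star_eq, mul_assoc]
  have hl : ∀ c : A, p * (p * c * p) = p * c * p := fun c => by rw [← mul_assoc, ← mul_assoc, hp.2]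
  have hr : ∀ c : A, p * c * p * p = p * c * p := fun c => by rw [mul_assoc _ p p, hp.2]
  exact ⟨mul_mem (mul_mem hpB hb) hpB, hl b, hr b, hstar ▸ hl (star b), hstar ▸ hr (star b)⟩

theorem IsProjection.mem_corner (hp : IsProjection p) (hpB : p ∈ B) : p ∈ corner p B := by
  simpa only [hp.2] using hp.mul_mul_mem_corner hpB hpB

theorem IsProjection.norm_mul_mul_le (hp : IsProjection p) (x : A) : ‖p * x * p‖ ≤ ‖x‖ := by
  have hp1 : ‖p‖ ≤ 1 := hp.isStarProjection.norm_le
  calc ‖p * x * p‖ ≤ ‖p‖ * ‖x‖ * ‖p‖ := (norm_mul_le _ _).trans (by gcongr; exact norm_mul_le _ _)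
    _ ≤ 1 * ‖x‖ * 1 := by gcongr
    _ = ‖x‖ := by ring

theorem IsProjection.norm_mul_mul_sub_le (hp : IsProjection p) (x b : A) :
    ‖p * x * p - p * b * p‖ ≤ ‖p * x * p - b‖ := by
  have hcut : p * (p * x * p - b) * p = p * x * p - p * b * p := by
    simp only [mul_sub, sub_mul, ← mul_assoc, hp.2]
    simp only [mul_assoc, hp.2]
  simpa only [hcut] using hp.norm_mul_mul_le (p * x * p - b)

end Corner

section Equivalence

variable {A : Type*} [CStarAlgebra A] [PartialOrder A] [StarOrderedRing A]
  {Ω : Set (NonUnitalStarSubalgebra ℂ A)}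

theorem memSTA_top_of_memTA (h : MemTA Ω) : MemSTA Ω ⊤ := by
  intro ε hε F _ a y _ ha ha0 _ hy
  obtain ⟨p, B, hp, hBΩ, hBclosed, hpB, -, hcomm, happrox, hcuntz⟩ := h ε hε F a ha ha0
  refine ⟨B, hBΩ, le_top, hBclosed, p, hpB, hp, hcomm, happrox, ?_⟩
  have hy' : y * y - y * p * y = y * (1 - p) * y := by noncomm_ring
  rw [NonUnitalStarAlgebra.coe_top, cuntzLEIn_univ_iff, hy']
  exact hcuntz.cutoff_mul_mul hε hp.isStarProjection.one_sub.isSelfAdjoint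
    (IsSelfAdjoint.of_nonneg hy)

theorem memTA_of_memSTA_top (hΩ : ∀ B ∈ Ω, ∀ p ∈ B, IsProjection p → corner p B ∈ Ω)
    (h : MemSTA Ω ⊤) : MemTA Ω := by
  intro ε hε F a ha ha0
  set δ := min ε (1 / 2)
  have hδ : 0 < δ := lt_min hε (by norm_num)
  have hδε : δ ≤ ε := min_le_left _ _
  obtain ⟨B, hBΩ, -, hBclosed, p, hpB, hp, hcomm, happrox, hcuntz⟩ :=
    h δ hδ F (fun _ _ => trivial) a 1 trivial ha ha0 trivial zero_le_one
  have hq : IsProjection (1 - p) :=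
    ⟨hp.isStarProjection.one_sub.isSelfAdjoint, hp.isStarProjection.one_sub.isIdempotentElem⟩
  simp only [one_mul, mul_one] at hcuntz
  refine ⟨p, corner p B, hp, hΩ B hBΩ p hpB hp, isClosed_corner hBclosed, hp.mem_corner hpB,
    fun b hb => ⟨hb.2.1, hb.2.2.1⟩, fun x hx => (hcomm x hx).trans_le hδε, fun x hx => ?_,
    hcuntz.cuntzLE.of_cutoff_of_isProjection hδ.le (by linarith [min_le_right ε (1 / 2)]) hq⟩
  obtain ⟨b, hb, hxb⟩ := happrox x hx
  exact ⟨p * b * p, hp.mul_mul_mem_corner hpB hb,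
    ((hp.norm_mul_mul_sub_le x b).trans_lt hxb).trans_le hδε⟩

end Equivalence

theorem stmt2_general {A : Type*} [CStarAlgebra A] [PartialOrder A] [StarOrderedRing A]
    (Ω : Set (NonUnitalStarSubalgebra ℂ A))
    (hΩ : ∀ B ∈ Ω, ∀ p ∈ B, IsProjection p → corner p B ∈ Ω) :
    MemTA Ω ↔ MemSTA Ω (⊤ : NonUnitalStarSubalgebra ℂ A) :=
  ⟨memSTA_top_of_memTA, memTA_of_memSTA_top hΩ⟩

/-- If Ω is closed under passing to unital hereditary C*-subalgebras and A is a
unital simple C*-algebra, then A ∈ TAΩ if and only if A ∈ STAΩ. -/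
theorem stmt2 {A : Type*} [CStarAlgebra A] [PartialOrder A] [StarOrderedRing A]
    (Ω : Set (NonUnitalStarSubalgebra ℂ A))
    (hΩ : ∀ B ∈ Ω, ∀ p ∈ B, IsProjection p → corner p B ∈ Ω)
    (hsimple : IsSimpleCStarAlgebra A) :
    MemTA Ω ↔ MemSTA Ω (⊤ : NonUnitalStarSubalgebra ℂ A) :=
  stmt2_general Ω hΩ
end

section
/- Let A be a C*-algebra, let b ∈ A be a positive element, let p ∈ A be a projection, and let c ∈ A be a positive element with c ≤ p. Let ε ≥ ε' > 0, and let d₁, d₂ ∈ A be positive elements with d₁d₂ = 0. If (b² − bpb − ε')_+ ≾ d₁ and p − c ≾ d₂, then (b² − bcb − 2ε)_+ ≾ d₁ + d₂ in the sense of Cuntz subequivalence. -/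
open Filter Topology
open scoped Matrix.Norms.L2Operator

open scoped CStarAlgebra

/-!
Write `b² - bcb = x + y` with `x = b(1 - p)b = b² - bpb ≥ 0` and `y = b(p - c)b ≥ 0`. In the
unitization `x ≤ (x - ε')₊ + ε'`, hence `b² - bcb ≤ z + ε'` for `z = (x - ε')₊ + y`, and since
`ε' < 2ε` the Kirchberg–Rørdam estimate gives `(b² - bcb - 2ε)₊ ≾ z`. Finally `(x - ε')₊ ≾ d₁`,
`y ≾ p - c ≾ d₂`, and Cuntz subequivalence adds up over the orthogonal pair `d₁, d₂`.
-/

def conjugates {R : Type*} [Mul R] [Star R] (b : R) : Set R :=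
  Set.range fun v : R => v * b * star v

section NonUnital

variable {A : Type*} [NonUnitalCStarAlgebra A]

theorem cuntzLE_iff_mem_closure {a b : A} : CuntzLE a b ↔ a ∈ closure (conjugates b) := by
  rw [mem_closure_iff_seq_limit]
  constructor
  · rintro ⟨v, hv⟩
    exact ⟨_, fun n => ⟨v n, rfl⟩, tendsto_iff_norm_sub_tendsto_zero.2 hv⟩
  · rintro ⟨x, hx, hlim⟩
    choose v hv using hx
    exact ⟨v, by simpa only [hv] using tendsto_iff_norm_sub_tendsto_zero.1 hlim⟩

theorem cuntzLE_star_mul_mul (g b : A) : CuntzLE (star g * b * g) b :=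
  cuntzLE_iff_mem_closure.2 <| subset_closure ⟨star g, by simp only [star_star]⟩

theorem CuntzLE.conj {a b : A} (g : A) (h : CuntzLE a b) : CuntzLE (g * a * star g) b := by
  rw [cuntzLE_iff_mem_closure] at h ⊢
  refine map_mem_closure (f := fun x => g * x * star g) (by fun_prop) h ?_
  rintro _ ⟨v, rfl⟩
  exact ⟨g * v, by simp only [star_mul, mul_assoc]⟩

theorem CuntzLE.trans {a b c : A} (hab : CuntzLE a b) (hbc : CuntzLE b c) : CuntzLE a c := by
  rw [cuntzLE_iff_mem_closure] at hab ⊢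
  refine closure_minimal ?_ isClosed_closure hab
  rintro _ ⟨v, rfl⟩
  exact cuntzLE_iff_mem_closure.1 (hbc.conj v)

end NonUnital

/-- `(t + s)⁻¹`, with `t` truncated at `0` so that it is continuous on all of `ℝ` when `0 < s`. -/
noncomputable def invAdd (s t : ℝ) : ℝ := (max t 0 + s)⁻¹

theorem invAdd_pos {s : ℝ} (hs : 0 < s) (t : ℝ) : 0 < invAdd s t :=
  inv_pos.2 (add_pos_of_nonneg_of_pos (le_max_right t 0) hs)

theorem continuous_invAdd {s : ℝ} (hs : 0 < s) : Continuous (invAdd s) :=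
  (by fun_prop : Continuous fun t : ℝ => max t 0 + s).inv₀ fun t =>
    (inv_pos.1 (invAdd_pos hs t)).ne'

theorem invAdd_of_nonneg (s : ℝ) {t : ℝ} (ht : 0 ≤ t) : invAdd s t = (t + s)⁻¹ := by
  rw [invAdd, max_eq_left ht]

section Unital

variable {E : Type*} [CStarAlgebra E]

theorem cfc_mul_mul_cfc {f g h : ℝ → ℝ} (hf : Continuous f) (hg : Continuous g)
    (hh : Continuous h) (a : E) :
    cfc f a * cfc g a * cfc h a = cfc (fun t => f t * g t * h t) a := by
  rw [← cfc_mul f g a, ← cfc_mul (fun t => f t * g t) h a]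

theorem cfc_mul_self_mul_cfc {f h : ℝ → ℝ} (hf : Continuous f) (hh : Continuous h) {a : E}
    (ha : IsSelfAdjoint a) : cfc f a * a * cfc h a = cfc (fun t => f t * t * h t) a := by
  calc cfc f a * a * cfc h a = cfc f a * cfc id a * cfc h a := by rw [cfc_id ℝ a]
    _ = _ := cfc_mul_mul_cfc hf continuous_id hh a

theorem cutoff_eq_cfc {r : ℝ} (hr : 0 ≤ r) (a : E) :
    cutoff r a = cfc (fun t => max 0 (t - r)) a :=
  cfcₙ_eq_cfc (hf0 := by simp [hr])

/-- `d (d + s)⁻¹`. -/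
noncomputable def approxUnit (s : ℝ) (d : E) : E := cfc (fun t => t * invAdd s t) d

theorem isSelfAdjoint_approxUnit (s : ℝ) (d : E) : IsSelfAdjoint (approxUnit s d) :=
  cfc_predicate _ d

theorem approxUnit_eq_mul {s : ℝ} (hs : 0 < s) {d : E} (hd : IsSelfAdjoint d) :
    approxUnit s d = d * cfc (invAdd s) d := by
  have := continuous_invAdd hs
  rw [approxUnit, cfc_mul (fun t => t) (invAdd s) d, cfc_id' ℝ d]

theorem approxUnit_mul_eq_zero {s : ℝ} (hs : 0 < s) {d x : E} (hd : IsSelfAdjoint d)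
    (h : d * x = 0) : approxUnit s d * x = 0 := by
  rw [approxUnit_eq_mul hs hd, ← ((Commute.refl d).cfc_real (invAdd s)).eq, mul_assoc, h,
    mul_zero]

theorem mul_approxUnit_eq_zero {s : ℝ} (hs : 0 < s) {d x : E} (hd : IsSelfAdjoint d)
    (h : x * d = 0) : x * approxUnit s d = 0 := by
  rw [approxUnit_eq_mul hs hd, ← mul_assoc, h, zero_mul]

variable [PartialOrder E] [StarOrderedRing E]

theorem norm_approxUnit_le_one {s : ℝ} (hs : 0 < s) {d : E} (hd : 0 ≤ d) :
    ‖approxUnit s d‖ ≤ 1 := by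
  refine norm_cfc_le zero_le_one fun t ht => ?_
  have ht : 0 ≤ t := spectrum_nonneg_of_nonneg hd ht
  rw [invAdd_of_nonneg s ht, Real.norm_of_nonneg (by positivity), ← div_eq_mul_inv,
    div_le_one (by positivity)]
  linarith

theorem norm_approxUnit_mul_mul_approxUnit_sub_le {s : ℝ} (hs : 0 < s) {d : E} (hd : 0 ≤ d) :
    ‖approxUnit s d * d * approxUnit s d - d‖ ≤ 2 * s := by
  have hc : Continuous fun t => t * invAdd s t := continuous_id.mul (continuous_invAdd hs)
  rw [approxUnit, cfc_mul_self_mul_cfc hc hc hd.isSelfAdjoint]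
  conv_lhs => enter [1, 2]; rw [← cfc_id' ℝ d]
  rw [← cfc_sub _ (fun t => t) d]
  refine norm_cfc_le (by positivity) fun t ht => ?_
  have ht : 0 ≤ t := spectrum_nonneg_of_nonneg hd ht
  have key : t * invAdd s t * t * (t * invAdd s t) - t =
      -(s * (t * (2 * t + s)) / (t + s) ^ 2) := by
    rw [invAdd_of_nonneg s ht]
    field_simp
    ring
  rw [key, norm_neg, Real.norm_of_nonneg (by positivity), div_le_iff₀ (by positivity)]
  nlinarith [mul_nonneg (mul_nonneg hs.le hs.le) ht, pow_pos hs 3]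

theorem tendsto_approxUnit_mul_mul_approxUnit {d : E} (hd : 0 ≤ d) :
    Tendsto (fun s => approxUnit s d * d * approxUnit s d) (𝓝[>] 0) (𝓝 d) := by
  have h2s : Tendsto (fun s : ℝ => 2 * s) (𝓝[>] 0) (𝓝 0) := by
    simpa using ((continuous_const_mul (2 : ℝ)).tendsto 0).mono_left nhdsWithin_le_nhds
  refine tendsto_iff_norm_sub_tendsto_zero.2
    (squeeze_zero' (.of_forall fun _ => norm_nonneg _) ?_ h2s)
  filter_upwards [self_mem_nhdsWithin] with s hs
  exact norm_approxUnit_mul_mul_approxUnit_sub_le hs hd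

theorem one_sub_approxUnit {s : ℝ} (hs : 0 < s) {d : E} (hd : 0 ≤ d) :
    1 - approxUnit s d = s • cfc (invAdd s) d := by
  have := continuous_invAdd hs
  rw [approxUnit, ← cfc_const_mul s _ d, ← cfc_const_one ℝ d, ← cfc_sub (fun _ => 1) _ d]
  refine cfc_congr fun t ht => ?_
  rw [invAdd_of_nonneg s (spectrum_nonneg_of_nonneg hd ht)]
  field_simp [(add_pos_of_nonneg_of_pos (spectrum_nonneg_of_nonneg hd ht) hs).ne']
  ring

/-- With `q = (b + s)^(-1/2)` and `v = a^(1/2) q` one has `v b v* - a = -s • v v*`, and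
`‖v v*‖ = ‖q a q‖ ≤ ‖q b q‖ ≤ 1`. -/
theorem norm_conj_sqrt_mul_sqrt_invAdd_sub_le {a b : E} (ha : 0 ≤ a) (hab : a ≤ b) {s : ℝ}
    (hs : 0 < s) :
    ‖(CFC.sqrt a * cfc (fun t => √(invAdd s t)) b) * b *
      star (CFC.sqrt a * cfc (fun t => √(invAdd s t)) b) - a‖ ≤ s := by
  have hb : 0 ≤ b := ha.trans hab
  have hqc : Continuous fun t => √(invAdd s t) := (continuous_invAdd hs).sqrt
  set q := cfc (fun t => √(invAdd s t)) b
  set x := CFC.sqrt a * q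
  have hq : IsSelfAdjoint q := cfc_predicate _ b
  have hr : IsSelfAdjoint (CFC.sqrt a) := (CFC.sqrt_nonneg a).isSelfAdjoint
  have hqq : q * q = cfc (invAdd s) b := by
    rw [← cfc_mul _ _ b hqc.continuousOn hqc.continuousOn]
    exact cfc_congr fun t _ => Real.mul_self_sqrt (invAdd_pos hs t).le
  have hqbq : q * b * q = approxUnit s b := by
    rw [cfc_mul_self_mul_cfc hqc hqc hb.isSelfAdjoint]
    refine cfc_congr fun t _ => ?_
    rw [mul_right_comm, Real.mul_self_sqrt (invAdd_pos hs t).le, mul_comm]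
  have key : x * b * star x - a = -(s • (x * star x)) := by
    have : x * b * star x = CFC.sqrt a * (q * b * q) * CFC.sqrt a := by
      simp only [x, star_mul, hq.star_eq, hr.star_eq, mul_assoc]
    have he : approxUnit s b = 1 - s • (q * q) := by
      rw [hqq, ← one_sub_approxUnit hs hb, sub_sub_cancel]
    rw [this, hqbq, he, mul_sub, sub_mul, mul_one, CFC.sqrt_mul_sqrt_self a ha]
    simp only [x, star_mul, hq.star_eq, hr.star_eq, mul_smul_comm, smul_mul_assoc, mul_assoc]
    abel
  have hxx : star x * x ≤ q * b * q := by
    have : star x * x = q * a * q := by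
      simp only [x, star_mul, hq.star_eq, hr.star_eq, mul_assoc]
      rw [← mul_assoc (CFC.sqrt a), CFC.sqrt_mul_sqrt_self a ha]
    exact this ▸ hq.conjugate_le_conjugate hab
  rw [key, norm_neg, norm_smul, Real.norm_of_nonneg hs.le, CStarRing.norm_self_mul_star,
    ← CStarRing.norm_star_mul_self]
  refine mul_le_of_le_one_right hs.le ?_
  exact (CStarAlgebra.norm_le_norm_of_nonneg_of_le (star_mul_self_nonneg x) hxx).trans
    (hqbq ▸ norm_approxUnit_le_one hs hb)

theorem CuntzLE.of_le {a b : E} (ha : 0 ≤ a) (hab : a ≤ b) : CuntzLE a b := by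
  rw [cuntzLE_iff_mem_closure, Metric.mem_closure_iff]
  intro ε hε
  have h := norm_conj_sqrt_mul_sqrt_invAdd_sub_le ha hab (half_pos hε)
  refine ⟨_, ⟨CFC.sqrt a * cfc (fun t => √(invAdd (ε / 2) t)) b, rfl⟩, ?_⟩
  rw [dist_comm, dist_eq_norm]
  exact h.trans_lt (half_lt_self hε)

/-- The cross terms of `(v e₁ + w e₂)(d₁ + d₂)(v e₁ + w e₂)*`, with `eᵢ = approxUnit s dᵢ`, vanish,
leaving `v (e₁ d₁ e₁) v* + w (e₂ d₂ e₂) w* → v d₁ v* + w d₂ w*`. -/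
theorem CuntzLE.add_of_mul_eq_zero {a b d₁ d₂ : E} (hd₁ : 0 ≤ d₁) (hd₂ : 0 ≤ d₂)
    (hd : d₁ * d₂ = 0) (ha : CuntzLE a d₁) (hb : CuntzLE b d₂) : CuntzLE (a + b) (d₁ + d₂) := by
  have hd' : d₂ * d₁ = 0 := by
    simpa only [star_mul, hd₁.isSelfAdjoint.star_eq, hd₂.isSelfAdjoint.star_eq, star_zero]
      using congrArg star hd
  rw [cuntzLE_iff_mem_closure] at ha hb ⊢
  rw [← closure_closure]
  refine map_mem_closure₂ continuous_add ha hb ?_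
  rintro _ ⟨v, rfl⟩ _ ⟨w, rfl⟩
  refine mem_closure_of_tendsto (((tendsto_const_nhds.mul
    (tendsto_approxUnit_mul_mul_approxUnit hd₁)).mul tendsto_const_nhds).add
    ((tendsto_const_nhds.mul (tendsto_approxUnit_mul_mul_approxUnit hd₂)).mul tendsto_const_nhds))
    (eventually_nhdsWithin_of_forall fun s (hs : 0 < s) => ?_)
  have h₁₂ (x : E) : x * approxUnit s d₁ * d₂ = 0 := by
    rw [mul_assoc, approxUnit_mul_eq_zero hs hd₁.isSelfAdjoint hd, mul_zero]
  have h₂₁ (x : E) : x * approxUnit s d₂ * d₁ = 0 := by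
    rw [mul_assoc, approxUnit_mul_eq_zero hs hd₂.isSelfAdjoint hd', mul_zero]
  have h₁₂' (x : E) : x * d₁ * approxUnit s d₂ = 0 := by
    rw [mul_assoc, mul_approxUnit_eq_zero hs hd₂.isSelfAdjoint hd, mul_zero]
  have h₂₁' (x : E) : x * d₂ * approxUnit s d₁ = 0 := by
    rw [mul_assoc, mul_approxUnit_eq_zero hs hd₁.isSelfAdjoint hd', mul_zero]
  refine ⟨v * approxUnit s d₁ + w * approxUnit s d₂, ?_⟩
  dsimp only
  rw [star_add, star_mul, star_mul, (isSelfAdjoint_approxUnit s d₁).star_eq,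
    (isSelfAdjoint_approxUnit s d₂).star_eq]
  simp only [add_mul, mul_add, ← mul_assoc, h₁₂, h₂₁, h₁₂', h₂₁', add_zero, zero_add]

theorem le_cutoff_add_smul_one {r : ℝ} (hr : 0 ≤ r) {a : E} (ha : IsSelfAdjoint a) :
    a ≤ cutoff r a + r • 1 := by
  rw [cutoff_eq_cfc hr, ← Algebra.algebraMap_eq_smul_one, ← cfc_add_const r _ a]
  conv_lhs => rw [← cfc_id' ℝ a]
  exact cfc_mono fun t _ => by linarith [le_max_right 0 (t - r)]

/-- With `w = ((a - r)₊ / (r - δ))^(1/2)` one has `(a - r)₊ ≤ w (a - δ) w ≤ w b w`. -/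
theorem cutoff_cuntzLE_of_le_add_smul_one {a b : E} (ha : IsSelfAdjoint a) {δ r : ℝ}
    (hr : 0 ≤ r) (hδr : δ < r) (hab : a ≤ b + δ • 1) : CuntzLE (cutoff r a) b := by
  have hrδ : 0 < r - δ := sub_pos.2 hδr
  set h : ℝ → ℝ := fun t => max 0 (t - r)
  have hwc : Continuous fun t => √(h t / (r - δ)) := by fun_prop
  set w := cfc (fun t => √(h t / (r - δ))) a
  have hw : IsSelfAdjoint w := cfc_predicate _ a
  have hshift : a - δ • 1 = cfc (fun t => t - δ) a := by
    rw [cfc_sub (fun t => t) (fun _ => δ) a, cfc_id' ℝ a, cfc_const δ a,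
      Algebra.algebraMap_eq_smul_one]
  have hle : cutoff r a ≤ w * b * w :=
    calc cutoff r a = cfc h a := cutoff_eq_cfc hr a
      _ ≤ cfc (fun t => √(h t / (r - δ)) * (t - δ) * √(h t / (r - δ))) a := by
        refine cfc_mono fun t _ => ?_
        rw [mul_right_comm, Real.mul_self_sqrt (div_nonneg (le_max_left _ _) hrδ.le),
          div_mul_eq_mul_div, le_div_iff₀ hrδ]
        rcases le_total t r with htr | htr
        · simp [h, max_eq_left (sub_nonpos.2 htr)]
        · exact mul_le_mul_of_nonneg_left (by linarith) (le_max_left _ _)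
      _ = w * (a - δ • 1) * w := by rw [hshift, cfc_mul_mul_cfc hwc (by fun_prop) hwc]
      _ ≤ w * b * w := hw.conjugate_le_conjugate (sub_le_iff_le_add.2 hab)
  have hpos : 0 ≤ cutoff r a := by
    rw [cutoff_eq_cfc hr]
    exact cfc_nonneg fun t _ => le_max_left _ _
  exact (CuntzLE.of_le hpos hle).trans
    (by simpa only [hw.star_eq] using cuntzLE_star_mul_mul w b)

end Unital

section Unitization

variable {A : Type*} [NonUnitalCStarAlgebra A]

theorem CuntzLE.inr {a b : A} (h : CuntzLE a b) : CuntzLE (a : A⁺¹) (b : A⁺¹) := by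
  rw [cuntzLE_iff_mem_closure] at h ⊢
  refine map_mem_closure (Unitization.isometry_inr (𝕜 := ℂ)).continuous h ?_
  rintro _ ⟨v, rfl⟩
  exact ⟨v, by simp only [Unitization.inr_mul, Unitization.inr_star]⟩

theorem Unitization.inr_cutoff {r : ℝ} (hr : 0 ≤ r) (a : A) :
    ((cutoff r a : A) : A⁺¹) = cutoff r (a : A⁺¹) := by
  rw [cutoff, Unitization.real_cfcₙ_eq_cfc_inr a _ (by simp [hr]), cutoff_eq_cfc hr]

variable [PartialOrder A] [StarOrderedRing A]

theorem CuntzLE.of_inr {a b : A} (hb : 0 ≤ b) (h : CuntzLE (a : A⁺¹) (b : A⁺¹)) :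
    CuntzLE a b := by
  rw [cuntzLE_iff_mem_closure] at h ⊢
  rw [(Unitization.isometry_inr (𝕜 := ℂ)).isEmbedding.closure_eq_preimage_closure_image]
  refine closure_minimal ?_ isClosed_closure h
  rintro _ ⟨v, rfl⟩
  have hb' : (0 : A⁺¹) ≤ b := Unitization.inr_nonneg_iff.2 hb
  refine mem_closure_of_tendsto ((tendsto_const_nhds.mul
    (tendsto_approxUnit_mul_mul_approxUnit hb')).mul tendsto_const_nhds)
    (eventually_nhdsWithin_of_forall fun s (hs : 0 < s) => ?_)
  obtain ⟨x, hx⟩ : ∃ x : A, (x : A⁺¹) = v * approxUnit s (b : A⁺¹) := by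
    refine ⟨_, Unitization.ext ?_ (Unitization.snd_inr _ _)⟩
    rw [Unitization.fst_inr, approxUnit_eq_mul hs hb'.isSelfAdjoint, Unitization.fst_mul,
      Unitization.fst_mul, Unitization.fst_inr, zero_mul, mul_zero]
  refine ⟨x * b * star x, ⟨x, rfl⟩, ?_⟩
  simp only [Unitization.inr_mul, Unitization.inr_star, hx, star_mul,
    (isSelfAdjoint_approxUnit _ _).star_eq, mul_assoc]

theorem IsProjection.mul_self_sub_mul_mul_nonneg {p : A} (hp : IsProjection p) {b : A}
    (hb : IsSelfAdjoint b) : 0 ≤ b * b - b * p * b := by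
  have h : star (b - p * b) * (b - p * b) = b * b - b * p * b := by
    rw [star_sub, star_mul, hb.star_eq, hp.1.star_eq]
    calc (b - b * p) * (b - p * b) = b * b - b * p * b - b * p * b + b * (p * p) * b := by
          noncomm_ring
      _ = b * b - b * p * b := by rw [hp.2]; abel
  exact h ▸ star_mul_self_nonneg _

end Unitization

theorem stmt10_general {A : Type*} [NonUnitalCStarAlgebra A] [PartialOrder A] [StarOrderedRing A]
    (b p c : A) (hb : 0 ≤ b) (hp : IsProjection p) (hcp : c ≤ p)
    (ε ε' : ℝ) (hε' : 0 < ε') (hε'ε : ε' ≤ ε)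
    (d₁ d₂ : A) (hd₁ : 0 ≤ d₁) (hd₂ : 0 ≤ d₂) (horth : d₁ * d₂ = 0)
    (h1 : CuntzLE (cutoff ε' (b * b - b * p * b)) d₁)
    (h2 : CuntzLE (p - c) d₂) :
    CuntzLE (cutoff (2 * ε) (b * b - b * c * b)) (d₁ + d₂) := by
  set x := b * b - b * p * b
  set y := b * (p - c) * b
  have hx : 0 ≤ x := hp.mul_self_sub_mul_mul_nonneg hb.isSelfAdjoint
  have hy : 0 ≤ y := hb.isSelfAdjoint.conjugate_nonneg (sub_nonneg.2 hcp)
  have hxy : b * b - b * c * b = x + y := by simp only [x, y]; noncomm_ring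
  have hy₂ : CuntzLE y d₂ := by simpa only [hb.isSelfAdjoint.star_eq] using h2.conj b
  have hle : (x : A⁺¹) + y ≤ ((cutoff ε' x : A) : A⁺¹) + y + ε' • 1 := by
    rw [add_right_comm, Unitization.inr_cutoff hε'.le]
    exact add_le_add_left (le_cutoff_add_smul_one hε'.le (hx.isSelfAdjoint.inr (R := ℂ))) _
  have hcut : CuntzLE (cutoff (2 * ε) ((x : A⁺¹) + y)) (((cutoff ε' x : A) : A⁺¹) + y) :=
    cutoff_cuntzLE_of_le_add_smul_one
      ((hx.isSelfAdjoint.inr (R := ℂ)).add (hy.isSelfAdjoint.inr (R := ℂ))) (by linarith)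
      (by linarith) hle
  have hsum : CuntzLE (((cutoff ε' x : A) : A⁺¹) + y) ((d₁ : A⁺¹) + d₂) :=
    CuntzLE.add_of_mul_eq_zero (Unitization.inr_nonneg_iff.2 hd₁)
      (Unitization.inr_nonneg_iff.2 hd₂)
      (by rw [← Unitization.inr_mul ℂ, horth, Unitization.inr_zero]) h1.inr hy₂.inr
  refine CuntzLE.of_inr (add_nonneg hd₁ hd₂) ?_
  rw [Unitization.inr_cutoff (by linarith), hxy, Unitization.inr_add ℂ, Unitization.inr_add ℂ]
  exact hcut.trans hsum

/-- If (b² − bpb − ε')₊ ≾ d₁ and p − c ≾ d₂ with d₁ ⊥ d₂, 0 ≤ c ≤ p and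
0 < ε' ≤ ε, then (b² − bcb − 2ε)₊ ≾ d₁ + d₂. -/
theorem stmt10 {A : Type*} [NonUnitalCStarAlgebra A] [PartialOrder A] [StarOrderedRing A]
    (b p c : A) (hb : 0 ≤ b) (hp : IsProjection p) (hc : 0 ≤ c) (hcp : c ≤ p)
    (ε ε' : ℝ) (hε' : 0 < ε') (hε'ε : ε' ≤ ε)
    (d₁ d₂ : A) (hd₁ : 0 ≤ d₁) (hd₂ : 0 ≤ d₂) (horth : d₁ * d₂ = 0)
    (h1 : CuntzLE (cutoff ε' (b * b - b * p * b)) d₁)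
    (h2 : CuntzLE (p - c) d₂) :
    CuntzLE (cutoff (2 * ε) (b * b - b * c * b)) (d₁ + d₂) :=
  stmt10_general b p c hb hp hcp ε ε' hε' hε'ε d₁ d₂ hd₁ hd₂ horth h1 h2
end
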